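/- arXiv:2312.14587 — 4 statements merged into one kernel-verified Lean document; each statement's English description precedes it below -/
import Mathlib

section
/- For all wqos A and B: (1) Pf(A ⊔ B) is order-isomorphic to Pf(A) × Pf(B) (via S ↦ (S ∩ A, S ∩ B)); and (2) Pf(A + B) is isomorphic, after quotienting each side by the equivalence ≤ ∩ ≥, to the lexicographic sum Pf(A) + (Pf(B) \ {∅}). -/
open Ordinal

universe u

/-- A preordered type is a well-quasi-order when every infinite sequence
contains an increasing pair. -/
def IsWqo (A : Type u) [Preorder A] : Prop :=
  ∀ f : ℕ → A, ∃ i j : ℕ, i < j ∧ f i ≤ f j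

/-- In the tree of finite sequences satisfying `P` (ordered by reverse prefix),
`t` is a child of `s` when `t` extends `s` by one element and satisfies `P`. -/
def ExtRel {A : Type u} (P : List A → Prop) (t s : List A) : Prop :=
  P t ∧ ∃ a : A, t = s ++ [a]

/-- The ordinal rank of the tree of finite sequences satisfying `P`, i.e. the rank of its
root (the empty sequence): the rank of a node is `0` on leaves and otherwise the supremum
of the successors of the ranks of its children.  (Junk value `0` when the tree is not
well-founded; in the statements below the wqo hypotheses guarantee well-foundedness.) -/
noncomputable def treeRank {A : Type u} (P : List A → Prop) : Ordinal.{u} :=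
  @dite _ (Acc (ExtRel P) ([] : List A)) (Classical.dec _) (fun h => h.rank) (fun _ => 0)

/-- The maximal order type `o(A)`: the rank of the tree `Bad(A)` of bad sequences. -/
noncomputable def mot (A : Type u) [Preorder A] : Ordinal.{u} :=
  treeRank (fun l : List A => l.Pairwise (fun a b => ¬ a ≤ b))

/-- The height `h(A)`: the rank of the tree `Dec(A)` of strictly decreasing sequences. -/
noncomputable def height (A : Type u) [Preorder A] : Ordinal.{u} :=
  treeRank (fun l : List A => l.Pairwise (fun a b => b < a))

/-- The width `w(A)`: the rank of the tree `Inco(A)` of sequences of pairwise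
incomparable elements. -/
noncomputable def width (A : Type u) [Preorder A] : Ordinal.{u} :=
  treeRank (fun l : List A => l.Pairwise (fun a b => ¬ a ≤ b ∧ ¬ b ≤ a))

/-- The finitary powerset: finite subsets of `A`. -/
def Pf (A : Type u) : Type u := {s : Set A // s.Finite}

/-- The Hoare embedding quasi-order on `Pf A`. -/
instance Pf.instPreorder {A : Type u} [Preorder A] : Preorder (Pf A) where
  le S T := ∀ a ∈ S.1, ∃ b ∈ T.1, a ≤ b
  le_refl S a ha := ⟨a, ha, le_refl a⟩
  le_trans S T U h1 h2 a ha := by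
    obtain ⟨b, hb, hab⟩ := h1 a ha
    obtain ⟨c, hc, hbc⟩ := h2 b hb
    exact ⟨c, hc, le_trans hab hbc⟩

/-- Auxiliary: a surjective order-reflecting-and-preserving map induces an
order isomorphism of antisymmetrizations. -/
lemma antisymm_iso_of_surj {α β : Type u} [Preorder α] [Preorder β] (f : α → β)
    (hsurj : Function.Surjective f) (hrel : ∀ a b : α, f a ≤ f b ↔ a ≤ b) :
    Nonempty ((Antisymmetrization α (· ≤ ·)) ≃o (Antisymmetrization β (· ≤ ·))) := by
  have hresp : ∀ a b : α, AntisymmRel ((· ≤ ·) : α → α → Prop) a b →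
      toAntisymmetrization ((· ≤ ·) : β → β → Prop) (f a) =
        toAntisymmetrization ((· ≤ ·) : β → β → Prop) (f b) := by
    intro a b h
    exact Quotient.sound' ⟨(hrel a b).2 h.1, (hrel b a).2 h.2⟩
  let g : Antisymmetrization α (· ≤ ·) → Antisymmetrization β (· ≤ ·) :=
    fun x => Quotient.liftOn' x (fun a => toAntisymmetrization ((· ≤ ·) : β → β → Prop) (f a)) hresp
  have hg : ∀ a : α, g (toAntisymmetrization ((· ≤ ·) : α → α → Prop) a) =
      toAntisymmetrization ((· ≤ ·) : β → β → Prop) (f a) :=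
    fun a => rfl
  have hginj : Function.Injective g := by
    intro x y
    induction x using Quotient.inductionOn'
    induction y using Quotient.inductionOn'
    rename_i a b
    intro h
    have : AntisymmRel ((· ≤ ·) : β → β → Prop) (f a) (f b) := Quotient.exact' h
    exact Quotient.sound' ⟨(hrel a b).1 this.1, (hrel b a).1 this.2⟩
  have hgsurj : Function.Surjective g := by
    intro y
    induction y using Quotient.inductionOn'
    rename_i b
    obtain ⟨a, rfl⟩ := hsurj b
    exact ⟨toAntisymmetrization ((· ≤ ·) : α → α → Prop) a, rfl⟩
  refine ⟨{ toEquiv := Equiv.ofBijective g ⟨hginj, hgsurj⟩, map_rel_iff' := ?_ }⟩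
  intro x y
  induction x using Quotient.inductionOn'
  induction y using Quotient.inductionOn'
  rename_i a b
  show g (toAntisymmetrization _ a) ≤ g (toAntisymmetrization _ b) ↔ _
  rw [hg, hg, toAntisymmetrization_le_toAntisymmetrization_iff]
  exact Iff.trans (hrel a b) toAntisymmetrization_le_toAntisymmetrization_iff.symm

/-- `Pf(A ⊔ B) ≅ Pf(A) × Pf(B)` via `S ↦ (S ∩ A, S ∩ B)`, and `Pf(A + B)` is
wpo-isomorphic to `Pf(A) + (Pf(B) \ {∅})`. -/
theorem pf_sum_isomorphisms (A B : Type u) [Preorder A] [Preorder B]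
    (hA : IsWqo A) (hB : IsWqo B) :
    (∃ e : Pf (A ⊕ B) ≃o Pf A × Pf B,
      ∀ S : Pf (A ⊕ B),
        ((e S).1).1 = Sum.inl ⁻¹' S.1 ∧ ((e S).2).1 = Sum.inr ⁻¹' S.1) ∧
    Nonempty ((Antisymmetrization (Pf (A ⊕ₗ B)) (· ≤ ·)) ≃o
      (Antisymmetrization (Pf A ⊕ₗ {T : Pf B // T.1 ≠ ∅}) (· ≤ ·))) := by
  constructor
  · -- Part 1
    refine ⟨{
      toFun := fun S => (⟨Sum.inl ⁻¹' S.1, S.2.preimage (Sum.inl_injective.injOn)⟩,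
        ⟨Sum.inr ⁻¹' S.1, S.2.preimage (Sum.inr_injective.injOn)⟩)
      invFun := fun P => ⟨Sum.inl '' P.1.1 ∪ Sum.inr '' P.2.1,
        (P.1.2.image _).union (P.2.2.image _)⟩
      left_inv := ?_
      right_inv := ?_
      map_rel_iff' := ?_ }, fun S => ⟨rfl, rfl⟩⟩
    · intro S
      apply Subtype.ext
      ext x
      cases x with
      | inl a => simp
      | inr b => simp
    · intro P
      refine Prod.ext (Subtype.ext ?_) (Subtype.ext ?_) <;> ext x <;> simp
    · intro S T
      constructor
      · rintro ⟨h1, h2⟩ x hx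
        cases x with
        | inl a =>
          obtain ⟨b, hb, hab⟩ := h1 a hx
          exact ⟨Sum.inl b, hb, Sum.inl_le_inl_iff.2 hab⟩
        | inr b =>
          obtain ⟨c, hc, hbc⟩ := h2 b hx
          exact ⟨Sum.inr c, hc, Sum.inr_le_inr_iff.2 hbc⟩
      · intro h
        constructor
        · intro a ha
          obtain ⟨y, hy, hay⟩ := h (Sum.inl a) ha
          cases y with
          | inl b => exact ⟨b, hy, Sum.inl_le_inl_iff.1 hay⟩
          | inr b => exact absurd hay Sum.not_inl_le_inr
        · intro a ha
          obtain ⟨y, hy, hay⟩ := h (Sum.inr a) ha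
          cases y with
          | inl b => exact absurd hay Sum.not_inr_le_inl
          | inr b => exact ⟨b, hy, Sum.inr_le_inr_iff.1 hay⟩
  · -- Part 2
    classical
    set ib : B → A ⊕ₗ B := fun b => toLex (Sum.inr b) with hib
    set ia : A → A ⊕ₗ B := fun a => toLex (Sum.inl a) with hia
    have hibinj : Function.Injective ib := fun x y h => by
      simpa [ib] using h
    have hiainj : Function.Injective ia := fun x y h => by
      simpa [ia] using h
    let f : Pf (A ⊕ₗ B) → Pf A ⊕ₗ {T : Pf B // T.1 ≠ ∅} := fun S =>
      if h : ib ⁻¹' S.1 = ∅ then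
        toLex (Sum.inl ⟨ia ⁻¹' S.1, S.2.preimage hiainj.injOn⟩)
      else
        toLex (Sum.inr ⟨⟨ib ⁻¹' S.1, S.2.preimage hibinj.injOn⟩, h⟩)
    apply antisymm_iso_of_surj f
    · rintro (⟨U, hU⟩ | ⟨⟨V, hV⟩, hVne⟩)
      · refine ⟨⟨ia '' U, hU.image _⟩, ?_⟩
        have hempty : ib ⁻¹' (ia '' U) = ∅ := by
          ext b
          simp only [Set.mem_preimage, Set.mem_empty_iff_false, iff_false]
          rintro ⟨a, _, h⟩
          exact Sum.inl_ne_inr (toLex.injective h)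
        have hpre : ia ⁻¹' (ia '' U) = U := by
          ext a
          constructor
          · rintro ⟨a', ha', h⟩
            rwa [hiainj h] at ha'
          · intro ha; exact ⟨a, ha, rfl⟩
        simp only [f, hempty, dif_pos]
        exact congrArg (fun W => toLex (Sum.inl W)) (Subtype.ext hpre)
      · refine ⟨⟨ib '' V, hV.image _⟩, ?_⟩
        have hpre : ib ⁻¹' (ib '' V) = V := by
          ext b
          constructor
          · rintro ⟨b', hb', h⟩
            rwa [hibinj h] at hb'
          · intro hb; exact ⟨b, hb, rfl⟩
        have hne : ib ⁻¹' (ib '' V) ≠ ∅ := by rw [hpre]; exact hVne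
        simp only [f, hne, dif_neg, not_false_iff]
        exact congrArg (fun W => toLex (Sum.inr W)) (Subtype.ext (Subtype.ext hpre))
    · intro S T
      -- key facts about membership
      have memcase : ∀ x : A ⊕ₗ B, (∃ a, x = ia a) ∨ (∃ b, x = ib b) := by
        intro x
        rcases hx : ofLex x with a | b
        · exact Or.inl ⟨a, by rw [show x = toLex (ofLex x) from rfl, hx]⟩
        · exact Or.inr ⟨b, by rw [show x = toLex (ofLex x) from rfl, hx]⟩
      by_cases hS : ib ⁻¹' S.1 = ∅ <;> by_cases hT : ib ⁻¹' T.1 = ∅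
      · -- both empty
        simp only [f, hS, hT, dif_pos, Sum.Lex.inl_le_inl_iff]
        refine Sum.Lex.inl_le_inl_iff.trans ?_
        constructor
        · intro h x hx
          rcases memcase x with ⟨a, rfl⟩ | ⟨b, rfl⟩
          · obtain ⟨a', ha', haa'⟩ := h a hx
            exact ⟨ia a', ha', Sum.Lex.inl_le_inl_iff.2 haa'⟩
          · exact absurd (Set.eq_empty_iff_forall_notMem.1 hS b hx) not_false
        · intro h a ha
          obtain ⟨y, hy, hay⟩ := h (ia a) ha
          rcases memcase y with ⟨a', rfl⟩ | ⟨b, rfl⟩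
          · exact ⟨a', hy, Sum.Lex.inl_le_inl_iff.1 hay⟩
          · exact absurd (Set.eq_empty_iff_forall_notMem.1 hT b hy) not_false
      · -- S empty, T not: both sides true
        simp only [f, hS, hT, dif_pos, dif_neg, not_false_iff]
        obtain ⟨b0, hb0⟩ := Set.nonempty_iff_ne_empty.2 hT
        constructor
        · intro _ x hx
          rcases memcase x with ⟨a, rfl⟩ | ⟨b, rfl⟩
          · exact ⟨ib b0, hb0, Sum.Lex.inl_le_inr a b0⟩
          · exact absurd (Set.eq_empty_iff_forall_notMem.1 hS b hx) not_false
        · intro _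
          exact Sum.Lex.inl_le_inr _ _
      · -- S not empty, T empty: both sides false
        simp only [f, hS, hT, dif_pos, dif_neg, not_false_iff]
        obtain ⟨b0, hb0⟩ := Set.nonempty_iff_ne_empty.2 hS
        constructor
        · intro h; exact absurd h Sum.Lex.not_inr_le_inl
        · intro h
          obtain ⟨y, hy, hby⟩ := h (ib b0) hb0
          rcases memcase y with ⟨a, rfl⟩ | ⟨b, rfl⟩
          · exact absurd hby Sum.Lex.not_inr_le_inl
          · exact absurd (Set.eq_empty_iff_forall_notMem.1 hT b hy) not_false
      · -- both nonempty
        simp only [f, hS, hT, dif_neg, not_false_iff, Sum.Lex.inr_le_inr_iff]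
        obtain ⟨b0, hb0⟩ := Set.nonempty_iff_ne_empty.2 hT
        constructor
        · intro h x hx
          rcases memcase x with ⟨a, rfl⟩ | ⟨b, rfl⟩
          · exact ⟨ib b0, hb0, Sum.Lex.inl_le_inr a b0⟩
          · obtain ⟨b', hb', hbb'⟩ := h b hx
            exact ⟨ib b', hb', Sum.Lex.inr_le_inr_iff.2 hbb'⟩
        · intro h b hb
          obtain ⟨y, hy, hby⟩ := h (ib b) hb
          rcases memcase y with ⟨a, rfl⟩ | ⟨b', rfl⟩
          · exact absurd hby Sum.Lex.not_inr_le_inl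
          · exact ⟨b', hy, Sum.Lex.inr_le_inr_iff.1 hby⟩
end

section
/- Let f be any of the three invariants o, h, w. For every wqo A and every ordinal β < f(A), there exists a substructure B of A (a subset with the induced order) such that f(B) = β. -/
open Ordinal

universe u

/-- Every ordinal `≤` the rank of `a` is attained as the rank of some element
reflexive-transitively below `a`. -/
theorem rank_attained {α : Type u} {r : α → α → Prop} {a : α} (ha : Acc r a)
    {β : Ordinal.{u}} (hβ : β ≤ ha.rank) :
    ∃ (b : α) (hb : Acc r b), Relation.ReflTransGen r b a ∧ hb.rank = β := by
  obtain rfl | ho := hβ.eq_or_lt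
  · exact ⟨a, ha, Relation.ReflTransGen.refl, rfl⟩
  · revert ho
    refine ha.recOn fun a ha IH ho ↦ ?_
    rw [Acc.rank_eq, Ordinal.lt_iSup_iff] at ho
    obtain ⟨⟨b, hb⟩, ho⟩ := ho
    rw [Order.lt_succ_iff] at ho
    obtain rfl | ho := ho.eq_or_lt
    · exact ⟨b, ha b hb, Relation.ReflTransGen.single hb, rfl⟩
    · obtain ⟨c, hc, hreach, hrank⟩ := IH b hb ho
      exact ⟨c, hc, hreach.tail hb, hrank⟩

/-- Ranks transfer along a map that induces a bijection between children. -/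
theorem rank_congr {α : Type u} {γ : Type u} {r : α → α → Prop} {r' : γ → γ → Prop}
    (f : α → γ)
    (h1 : ∀ a b, r b a → r' (f b) (f a))
    (h2 : ∀ a b', r' b' (f a) → ∃ b, r b a ∧ f b = b') :
    ∀ {a : α} (ha : Acc r a) (ha' : Acc r' (f a)), ha'.rank = ha.rank := by
  intro a ha
  induction ha with
  | intro a hacc IH =>
    intro ha'
    rw [Acc.rank_eq, Acc.rank_eq]
    apply le_antisymm
    · apply Ordinal.iSup_le
      rintro ⟨b', hb'⟩
      obtain ⟨b, hb, rfl⟩ := h2 a b' hb'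
      have := IH b hb (ha'.inv hb')
      rw [this]
      exact (Ordinal.le_iSup (fun c : {c // r c a} => Order.succ ((Acc.intro a hacc).inv c.2).rank) ⟨b, hb⟩)
    · apply Ordinal.iSup_le
      rintro ⟨b, hb⟩
      have h' := h1 a b hb
      have := IH b hb (ha'.inv h')
      rw [← this]
      exact (Ordinal.le_iSup (fun c : {c // r' c (f a)} => Order.succ (ha'.inv c.2).rank) ⟨f b, h'⟩)

variable {A : Type u} [Preorder A]

/-- wqo implies the tree of `Pairwise Q`-sequences is well-founded, for `Q` contained in
the "bad" relation. -/
theorem acc_extRel {Q : A → A → Prop} (hQ : ∀ a b, Q a b → ¬ a ≤ b) (hA : IsWqo A)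
    (l : List A) : Acc (ExtRel (fun l : List A => l.Pairwise Q)) l := by
  set P : List A → Prop := fun l : List A => l.Pairwise Q with hP
  by_contra hl
  have H : ∀ x : {l : List A // ¬ Acc (ExtRel P) l},
      ∃ y : {l : List A // ¬ Acc (ExtRel P) l}, ExtRel P y.1 x.1 := by
    rintro ⟨x, hx⟩
    by_contra h
    push_neg at h
    exact hx (Acc.intro x fun y hy => by_contra fun hny => h ⟨y, hny⟩ hy)
  let f : ℕ → {l : List A // ¬ Acc (ExtRel P) l} :=
    fun n => Nat.rec ⟨l, hl⟩ (fun _ x => Classical.choose (H x)) n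
  have hf : ∀ n, ExtRel P (f (n + 1)).1 (f n).1 := fun n => Classical.choose_spec (H (f n))
  have hg : ∀ n, ∃ a : A, (f (n + 1)).1 = (f n).1 ++ [a] := fun n => (hf n).2
  set g : ℕ → A := fun n => Classical.choose (hg n) with hgdef
  have hg' : ∀ n, (f (n + 1)).1 = (f n).1 ++ [g n] := fun n => Classical.choose_spec (hg n)
  have hpre : ∀ i j, i ≤ j → (f i).1 <+: (f j).1 := by
    intro i j hij
    induction j with
    | zero => obtain rfl := Nat.le_zero.mp hij; exact List.prefix_rfl
    | succ j IHj =>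
      rcases Nat.lt_or_ge i (j + 1) with h | h
      · exact (IHj (Nat.lt_succ_iff.mp h)).trans ⟨[g j], (hg' j).symm⟩
      · have : i = j + 1 := le_antisymm hij h
        subst this; exact List.prefix_rfl
  have hmem : ∀ i, g i ∈ (f (i + 1)).1 := by
    intro i; rw [hg' i]; exact List.mem_append_right _ (List.mem_singleton_self _)
  have hbad : ∀ i j, i < j → Q (g i) (g j) := by
    intro i j hij
    have h1 : g i ∈ (f j).1 := (hpre (i + 1) j hij).subset (hmem i)
    have h2 : List.Pairwise Q ((f j).1 ++ [g j]) := by rw [← hg' j]; exact (hf j).1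
    rw [List.pairwise_append] at h2
    exact h2.2.2 _ h1 _ (List.mem_singleton_self _)
  obtain ⟨i, j, hij, hle⟩ := hA g
  exact hQ _ _ (hbad i j hij) hle


theorem descend {A : Type u} [Preorder A] (Q : A → A → Prop)
    (hQ : ∀ a b, Q a b → ¬ a ≤ b) (hA : IsWqo A) {β : Ordinal.{u}}
    (hβ : β < treeRank (fun l : List A => l.Pairwise Q)) :
    ∃ S : Set A, treeRank (fun l : List ↥S => l.Pairwise (fun x y => Q x.1 y.1)) = β := by
  set P : List A → Prop := fun l : List A => l.Pairwise Q with hP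
  have hacc : ∀ l : List A, Acc (ExtRel P) l := acc_extRel hQ hA
  have htr : treeRank P = (hacc []).rank := dif_pos (hacc [])
  rw [htr] at hβ
  obtain ⟨s, hs, hreach, hrank⟩ := rank_attained (hacc []) hβ.le
  have hPs : List.Pairwise Q s := by
    rcases hreach.cases_head with h | ⟨c, hc, _⟩
    · rw [h]; exact List.Pairwise.nil
    · exact hc.1
  refine ⟨{a : A | List.Pairwise Q (s ++ [a])}, ?_⟩
  set S : Set A := {a : A | List.Pairwise Q (s ++ [a])} with hS
  set Q' : ↥S → ↥S → Prop := fun x y => Q x.1 y.1 with hQ'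
  set P' : List ↥S → Prop := fun l => l.Pairwise Q' with hP'
  -- membership in S gives the key property
  have hSmem : ∀ a : A, a ∈ S → ∀ x ∈ s, Q x a := by
    intro a ha x hx
    have := (List.pairwise_append.mp ha).2.2
    exact this x hx a (List.mem_singleton_self _)
  set f : List ↥S → List A := fun l => s ++ l.map Subtype.val with hf
  have key : ∀ l : List ↥S, P (f l) ↔ P' l := by
    intro l
    show List.Pairwise Q (s ++ l.map Subtype.val) ↔ l.Pairwise Q'
    rw [List.pairwise_append, List.pairwise_map]
    constructor
    · rintro ⟨-, h2, -⟩
      exact h2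
    · intro h
      refine ⟨hPs, h, ?_⟩
      intro x hx b hb
      obtain ⟨⟨b', hb'⟩, -, rfl⟩ := List.mem_map.mp hb
      exact hSmem b' hb' x hx
  have hwqoS : IsWqo ↥S := by
    intro g
    obtain ⟨i, j, hij, hle⟩ := hA (fun n => (g n).1)
    exact ⟨i, j, hij, hle⟩
  have haccS : ∀ l : List ↥S, Acc (ExtRel P') l :=
    acc_extRel (fun a b h => hQ a.1 b.1 h) hwqoS
  have h1 : ∀ (a b : List ↥S), ExtRel P' b a → ExtRel P (f b) (f a) := by
    rintro l l' ⟨hPl', a, rfl⟩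
    refine ⟨(key _).mpr hPl', a.1, ?_⟩
    rw [hf]
    simp
  have h2 : ∀ (a : List ↥S) (b' : List A), ExtRel P b' (f a) → ∃ b, ExtRel P' b a ∧ f b = b' := by
    rintro l t ⟨hPt, b, rfl⟩
    have hbS : b ∈ S := by
      rw [hS, Set.mem_setOf_eq]
      refine List.Pairwise.sublist ?_ hPt
      rw [hf, List.append_assoc]
      exact (List.Sublist.refl s).append
        ((List.sublist_append_right _ _).trans (List.Sublist.refl _))
    refine ⟨l ++ [⟨b, hbS⟩], ⟨?_, ⟨b, hbS⟩, rfl⟩, ?_⟩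
    · apply (key _).mp
      rw [hf]
      show List.Pairwise Q (s ++ List.map Subtype.val (l ++ [⟨b, hbS⟩]))
      rw [List.map_append, List.map_cons, List.map_nil, ← List.append_assoc]
      exact hPt
    · rw [hf]
      simp
  have hfnil : f ([] : List ↥S) = s := by rw [hf]; simp
  have hs' : Acc (ExtRel P) (f ([] : List ↥S)) := hfnil ▸ hs
  have heq := rank_congr f h1 h2 (haccS []) hs'
  have h3 : ∀ (t : List A) (ht : Acc (ExtRel P) t), f [] = t → hs'.rank = ht.rank := by
    rintro t ht rfl; rfl
  have htr' : treeRank P' = (haccS []).rank := dif_pos (haccS [])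
  rw [htr', ← heq, h3 s hs hfnil, hrank]

/-- For each invariant `f ∈ {o, h, w}` and each `β < f(A)`, some substructure `B` of `A`
(a subset with the induced order) has `f(B) = β`. -/
theorem invariant_descent (A : Type u) [Preorder A] (hA : IsWqo A) (β : Ordinal.{u}) :
    (β < mot A → ∃ S : Set A, mot ↥S = β) ∧
    (β < height A → ∃ S : Set A, height ↥S = β) ∧
    (β < width A → ∃ S : Set A, width ↥S = β) := by
  refine ⟨fun h => ?_, fun h => ?_, fun h => ?_⟩
  · obtain ⟨S, hS⟩ := descend (fun a b : A => ¬ a ≤ b) (fun _ _ h => h) hA h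
    exact ⟨S, hS⟩
  · obtain ⟨S, hS⟩ := descend (fun a b : A => b < a) (fun _ _ h => h.not_ge) hA h
    exact ⟨S, hS⟩
  · obtain ⟨S, hS⟩ := descend (fun a b : A => ¬ a ≤ b ∧ ¬ b ≤ a) (fun _ _ h => h.1) hA h
    exact ⟨S, hS⟩
end

section
/- Let A and B be wqos and f: A → B a condensation, i.e., f is surjective and monotonic, and whenever b ≤_B f(y) there exists x ≤_A y with f(x) = b. Then h(B) ≤ h(A). -/
open Ordinal

universe u

section Aux

variable {A B : Type u} [Preorder A] [Preorder B]

/-- The root of the tree of strictly decreasing sequences of a wqo is accessible. -/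
lemma acc_dec_root (hA : IsWqo A) :
    Acc (ExtRel (fun l : List A => l.Pairwise (fun a b => b < a))) [] := by
  set P : List A → Prop := fun l => l.Pairwise (fun a b => b < a) with hP
  by_contra h0
  have hex : ∀ l : {l : List A // ¬ Acc (ExtRel P) l},
      ∃ t : {l : List A // ¬ Acc (ExtRel P) l}, ExtRel P t.1 l.1 := by
    rintro ⟨l, hl⟩
    obtain ⟨t, ht, hrel⟩ := exists_not_acc_lt_of_not_acc hl
    exact ⟨⟨t, ht⟩, hrel⟩
  choose step hstep using hex
  set g : ℕ → {l : List A // ¬ Acc (ExtRel P) l} := fun n => step^[n] ⟨[], h0⟩ with hg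
  have hstep' : ∀ n, ExtRel P (g (n+1)).1 (g n).1 := by
    intro n
    rw [hg]
    simp only [Function.iterate_succ']
    exact hstep _
  set a : ℕ → A := fun n => (hstep' n).2.choose with ha
  have hga : ∀ n, (g (n+1)).1 = (g n).1 ++ [a n] := fun n => (hstep' n).2.choose_spec
  have hg0 : (g 0).1 = [] := rfl
  have hform : ∀ n, (g n).1 = (List.range n).map a := by
    intro n; induction n with
    | zero => exact hg0
    | succ n ih => rw [hga n, ih, List.range_succ, List.map_append]; rfl
  obtain ⟨i, j, hij, hle⟩ := hA a
  have hPj : P ((g (j+1)).1) := (hstep' j).1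
  rw [hform (j+1)] at hPj
  simp only [hP] at hPj
  rw [List.pairwise_map, List.pairwise_iff_get] at hPj
  have hji : a j < a i := by
    have := hPj ⟨i, by simpa using Nat.lt_succ_of_lt hij⟩ ⟨j, by simp⟩ (by simpa using hij)
    simpa using this
  exact absurd (lt_of_lt_of_le hji hle) (lt_irrefl _)

variable (f : A → B) (hsurj : Function.Surjective f) (hmono : Monotone f)
  (hcond : ∀ (y : A) (b : B), b ≤ f y → ∃ x, x ≤ y ∧ f x = b)

include hsurj hmono hcond in
/-- Lifting step: a child of `l.map f` in `Dec B` lifts to a child of `l` in `Dec A`. -/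
lemma lift_step (l : List A) (hPl : l.Pairwise (fun a b => b < a)) (b : B)
    (hPt : (l.map f ++ [b]).Pairwise (fun x y : B => y < x)) :
    ∃ x : A, f x = b ∧ (l ++ [x]).Pairwise (fun a b => b < a) := by
  rw [List.pairwise_append] at hPt
  have hbf : ∀ a ∈ l, b < f a := by
    intro a hal
    exact hPt.2.2 (f a) (List.mem_map_of_mem hal) b (List.mem_singleton_self b)
  rcases List.eq_nil_or_concat l with rfl | ⟨l', y, rfl⟩
  all_goals simp only [List.concat_eq_append, List.nil_append] at hPl hbf ⊢
  · obtain ⟨x, hx⟩ := hsurj b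
    exact ⟨x, hx, List.pairwise_singleton _ _⟩
  · have hby : b < f y := hbf y (by simp)
    obtain ⟨x, hxy, hfx⟩ := hcond y b hby.le
    refine ⟨x, hfx, ?_⟩
    rw [List.pairwise_append]
    refine ⟨hPl, List.pairwise_singleton _ _, ?_⟩
    intro a hal x' hx'
    rw [List.mem_singleton] at hx'
    subst hx'
    rcases List.mem_append.1 hal with hal' | hay
    · -- a ∈ l', so y < a, and x ≤ y
      have hya : y < a := by
        rw [List.pairwise_append] at hPl
        have := hPl.2.2 a hal' y (List.mem_singleton_self y)
        exact this
      exact lt_of_le_of_lt hxy hya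
    · rw [List.mem_singleton] at hay
      subst hay
      refine lt_iff_le_not_ge.2 ⟨hxy, fun hyx => ?_⟩
      have : f a ≤ b := hfx ▸ hmono hyx
      exact absurd (lt_of_lt_of_le hby this) (lt_irrefl _)

include hsurj hmono hcond in
lemma cond_acc_map (l : List A)
    (h : Acc (ExtRel (fun l : List A => l.Pairwise (fun a b => b < a))) l) :
    l.Pairwise (fun a b => b < a) →
      Acc (ExtRel (fun l : List B => l.Pairwise (fun a b => b < a))) (l.map f) := by
  induction h with
  | intro l hl ih =>
    intro hPl
    constructor
    rintro t ⟨hPt, b, rfl⟩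
    obtain ⟨x, hfx, hPlx⟩ := lift_step f hsurj hmono hcond l hPl b hPt
    have : l.map f ++ [b] = (l ++ [x]).map f := by rw [List.map_append, List.map_singleton, hfx]
    rw [this]
    exact ih (l ++ [x]) ⟨hPlx, x, rfl⟩ hPlx

include hsurj hmono hcond in
lemma cond_rank_map_le (l : List A)
    (h : Acc (ExtRel (fun l : List A => l.Pairwise (fun a b => b < a))) l) :
    l.Pairwise (fun a b => b < a) →
      ∀ (h' : Acc (ExtRel (fun l : List B => l.Pairwise (fun a b => b < a))) (l.map f)),
        h'.rank ≤ h.rank := by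
  induction h with
  | intro l hl ih =>
    intro hPl h'
    rw [h'.rank_eq]
    apply Ordinal.iSup_le
    rintro ⟨t, ht⟩
    obtain ⟨hPt, b, rfl⟩ := ht
    obtain ⟨x, hfx, hPlx⟩ := lift_step f hsurj hmono hcond l hPl b hPt
    have heq : l.map f ++ [b] = (l ++ [x]).map f := by rw [List.map_append, List.map_singleton, hfx]
    have hchild : ExtRel (fun l : List A => l.Pairwise (fun a b => b < a)) (l ++ [x]) l :=
      ⟨hPlx, x, rfl⟩
    have h2 : Acc _ ((l ++ [x]).map f) := heq ▸ (h'.inv ⟨hPt, b, rfl⟩)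
    have hle : h2.rank ≤ (hl (l ++ [x]) hchild).rank :=
      ih (l ++ [x]) hchild hPlx h2
    have hlt : (hl (l ++ [x]) hchild).rank < (Acc.intro l hl).rank :=
      Acc.rank_lt_of_rel (Acc.intro l hl) hchild
    have hrankeq : ∀ {m m' : List B} (_ : m = m')
        (hm : Acc (ExtRel (fun l : List B => l.Pairwise (fun a b => b < a))) m)
        (hm' : Acc (ExtRel (fun l : List B => l.Pairwise (fun a b => b < a))) m'),
        hm.rank = hm'.rank := by
      rintro m m' rfl hm hm'; rfl
    have : (h'.inv ⟨hPt, b, rfl⟩).rank ≤ h2.rank := (hrankeq heq _ h2).le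
    exact Order.succ_le_of_lt (lt_of_le_of_lt (this.trans hle) hlt)

end Aux

/-- A condensation (surjective monotonic map such that every element below `f y`
has a preimage below `y`) can only decrease the height: `h(B) ≤ h(A)`. -/
theorem condensation_height (A B : Type u) [Preorder A] [Preorder B]
    (hA : IsWqo A) (hB : IsWqo B) (f : A → B)
    (hsurj : Function.Surjective f) (hmono : Monotone f)
    (hcond : ∀ (y : A) (b : B), b ≤ f y → ∃ x, x ≤ y ∧ f x = b) :
    height B ≤ height A := by
  have hA0 : Acc (ExtRel (fun l : List A => l.Pairwise (fun a b => b < a))) [] :=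
    acc_dec_root hA
  have hB0 : Acc (ExtRel (fun l : List B => l.Pairwise (fun a b => b < a))) [] := by
    have := cond_acc_map f hsurj hmono hcond [] hA0 (List.Pairwise.nil)
    simpa using this
  unfold height treeRank
  rw [dif_pos hA0, dif_pos hB0]
  have := cond_rank_map_le f hsurj hmono hcond [] hA0 (List.Pairwise.nil)
  exact this hB0
end

section
/- Let A be any wqo and B a transferable wqo. Then w(A × B) ≥ w(B) · o(A), where A × B is the Cartesian product ordered componentwise and · is ordinal multiplication. -/
open Ordinal

universe u

theorem treeRank_eq_rank {α : Type u} {P : List α → Prop} (h : Acc (ExtRel P) ([] : List α)) :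
    treeRank P = h.rank := by
  rw [treeRank, dif_pos h]

theorem acc_extRel_s19 {α : Type u} {r : α → α → Prop}
    (hr : ∀ f : ℕ → α, ∃ i j : ℕ, i < j ∧ ¬ r (f i) (f j)) (l₀ : List α) :
    Acc (ExtRel (fun l : List α => l.Pairwise r)) l₀ := by
  by_contra h₀
  have step : ∀ l : List α, ¬ Acc (ExtRel (fun l : List α => l.Pairwise r)) l →
      ∃ a : α, (l ++ [a]).Pairwise r ∧
        ¬ Acc (ExtRel (fun l : List α => l.Pairwise r)) (l ++ [a]) := by
    intro l hl
    by_contra hc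
    push_neg at hc
    exact hl (Acc.intro l (by rintro t ⟨hp, a, rfl⟩; exact hc a hp))
  let T := {l : List α // ¬ Acc (ExtRel (fun l : List α => l.Pairwise r)) l}
  have hnxt : ∀ t : T, ∃ t' : T, ∃ a : α, t'.1 = t.1 ++ [a] ∧ (t.1 ++ [a]).Pairwise r := by
    intro t
    obtain ⟨a, h1, h2⟩ := step t.1 t.2
    exact ⟨⟨t.1 ++ [a], h2⟩, a, rfl, h1⟩
  choose nxt a ha hp using hnxt
  let seq : ℕ → T := fun n => Nat.rec ⟨l₀, h₀⟩ (fun _ t => nxt t) n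
  let f : ℕ → α := fun k => a (seq k)
  have hseq : ∀ n, (seq n).1 = l₀ ++ List.map f (List.range n) := by
    intro n
    induction n with
    | zero =>
      show (⟨l₀, h₀⟩ : T).1 = _
      rw [List.range_zero, List.map_nil, List.append_nil]
    | succ n ihn =>
      have h1 : seq (n + 1) = nxt (seq n) := rfl
      rw [h1, ha (seq n), ihn, List.range_succ, List.map_append, List.append_assoc]
      rfl
  obtain ⟨i, j, hij, hnr⟩ := hr f
  apply hnr
  have hpj : ((seq j).1 ++ [f j]).Pairwise r := hp (seq j)
  rw [hseq j, List.append_assoc] at hpj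
  have h2 : (List.map f (List.range j) ++ [f j]).Pairwise r :=
    (List.pairwise_append.mp hpj).2.1
  have hmem : f i ∈ List.map f (List.range j) :=
    List.mem_map.mpr ⟨i, List.mem_range.mpr hij, rfl⟩
  exact (List.pairwise_append.mp h2).2.2 _ hmem _ (List.mem_singleton_self _)

theorem isWqo_prod {A B : Type u} [Preorder A] [Preorder B] (hA : IsWqo A) (hB : IsWqo B) :
    IsWqo (A × B) := fun f => by
  have h : (Set.univ ×ˢ Set.univ : Set (A × B)).IsPWO :=
    Set.IsPWO.prod (fun g => hA (fun n => (g n).1)) (fun g => hB (fun n => (g n).1))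
  exact h fun n => ⟨f n, Set.mem_prod.mpr ⟨trivial, trivial⟩⟩

theorem isWqo_subtype {B : Type u} [Preorder B] (hB : IsWqo B) (S : Set B) : IsWqo ↥S :=
  fun f => by
  obtain ⟨i, j, hij, hle⟩ := hB fun n => (f n).1
  exact ⟨i, j, hij, hle⟩

/-- If `B` is transferable then `w(A × B) ≥ w(B) · o(A)` for every wqo `A`. -/
theorem transferable_product_width (A B : Type u) [Preorder A] [Preorder B]
    (hA : IsWqo A) (hB : IsWqo B)
    (htransf : ∀ (n : ℕ) (x : Fin n → B),
      width ↥{y : B | ∀ i, ¬ y ≤ x i} = width B) :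
    width B * mot A ≤ width (A × B) := by
  classical
  have hAccA : ∀ s : List A,
      Acc (ExtRel (fun l : List A => l.Pairwise fun a b => ¬ a ≤ b)) s :=
    acc_extRel_s19 fun f => by
      obtain ⟨i, j, hij, h⟩ := hA f
      exact ⟨i, j, hij, not_not_intro h⟩
  have hwqoC : IsWqo (A × B) := isWqo_prod hA hB
  have hAccC : ∀ l : List (A × B),
      Acc (ExtRel (fun l : List (A × B) => l.Pairwise fun a b => ¬ a ≤ b ∧ ¬ b ≤ a)) l :=
    acc_extRel_s19 fun f => by
      obtain ⟨i, j, hij, h⟩ := hwqoC f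
      exact ⟨i, j, hij, fun hc => hc.1 h⟩
  have hAccS : ∀ (S : Set B) (m : List ↥S),
      Acc (ExtRel (fun l : List ↥S => l.Pairwise fun a b => ¬ a ≤ b ∧ ¬ b ≤ a)) m :=
    fun S => acc_extRel_s19 fun f => by
      obtain ⟨i, j, hij, h⟩ := isWqo_subtype hB S f
      exact ⟨i, j, hij, fun hc => hc.1 h⟩
  have hwS : ∀ l : List (A × B),
      ((hAccS {y : B | ∀ p ∈ l, ¬ y ≤ p.2} ([])).rank) = width B := by
    intro l
    have hset : {y : B | ∀ i : Fin l.length, ¬ y ≤ (l.get i).2}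
        = {y : B | ∀ p ∈ l, ¬ y ≤ p.2} := by
      ext y
      simp only [Set.mem_setOf_eq]
      constructor
      · intro h p hp
        obtain ⟨i, rfl⟩ := List.mem_iff_get.mp hp
        exact h i
      · intro h i
        exact h _ (l.get_mem i)
    rw [← htransf l.length (fun i => (l.get i).2),
      ← treeRank_eq_rank (hAccS {y : B | ∀ p ∈ l, ¬ y ≤ p.2} [])]
    exact congrArg (fun S : Set B => width ↥S) hset.symm
  have main : ∀ s : List A, (List.Pairwise (fun a b => ¬ a ≤ b) s) →
      ∀ l : List (A × B), (List.Pairwise (fun p q : A × B => ¬ p ≤ q ∧ ¬ q ≤ p) l) →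
      (∀ p ∈ l, p.1 ∈ s) → width B * (hAccA s).rank ≤ (hAccC l).rank := by
    intro s
    induction hAccA s with
    | intro s haccs ihs =>
      intro hs l hl hcomp
      rw [Acc.rank_eq (hAccA s)]
      rcases isEmpty_or_nonempty
        {t // ExtRel (fun l : List A => l.Pairwise fun a b => ¬ a ≤ b) t s} with hemp | hne
      · rw [ciSup_of_empty]
        simp
      rcases eq_or_ne (width B) 0 with hw0 | hw0
      · rw [hw0]
        simp
      have hwpos : 0 < width B := pos_iff_ne_zero.mpr hw0
      refine le_trans (le_of_eq ((Ordinal.isNormal_mul_right hwpos).map_iSup Ordinal.bddAbove_of_small))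
        (Ordinal.iSup_le ?_)
      rintro ⟨t, ht⟩
      obtain ⟨hpt, aa, rfl⟩ := ht
      rw [Ordinal.mul_succ]
      set Sl : Set B := {y : B | ∀ p ∈ l, ¬ y ≤ p.2} with hSl
      have hbaa : ∀ a' ∈ s, ¬ a' ≤ aa :=
        fun a' ha' => (List.pairwise_append.mp hpt).2.2 a' ha' aa (List.mem_singleton_self _)
      set fm : ↥Sl → A × B := fun y => (aa, y.1) with hfm
      have hblock : ∀ m : List ↥Sl,
          (List.Pairwise (fun a b : ↥Sl => ¬ a ≤ b ∧ ¬ b ≤ a) m) →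
          List.Pairwise (fun p q : A × B => ¬ p ≤ q ∧ ¬ q ≤ p) (l ++ m.map fm) := by
        intro m hm
        rw [List.pairwise_append]
        refine ⟨hl, ?_, ?_⟩
        · rw [List.pairwise_map]
          refine hm.imp ?_
          intro y z hyz
          constructor
          · intro hle
            exact hyz.1 (Subtype.coe_le_coe.mp (Prod.le_def.mp hle).2)
          · intro hle
            exact hyz.2 (Subtype.coe_le_coe.mp (Prod.le_def.mp hle).2)
        · intro p hp q hq
          obtain ⟨y, hy, rfl⟩ := List.mem_map.mp hq
          constructor
          · intro hle
            exact hbaa p.1 (hcomp p hp) (Prod.le_def.mp hle).1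
          · intro hle
            exact y.2 p hp (Prod.le_def.mp hle).2
      have hcmps : ∀ m : List ↥Sl, ∀ p ∈ l ++ m.map fm, p.1 ∈ s ++ [aa] := by
        intro m p hp
        rcases List.mem_append.mp hp with h | h
        · exact List.mem_append.mpr (Or.inl (hcomp p h))
        · obtain ⟨y, hy, rfl⟩ := List.mem_map.mp h
          exact List.mem_append.mpr (Or.inr (List.mem_singleton_self _))
      have hbase : ∀ l' : List (A × B),
          (List.Pairwise (fun p q : A × B => ¬ p ≤ q ∧ ¬ q ≤ p) l') →
          (∀ p ∈ l', p.1 ∈ s ++ [aa]) →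
          width B * (hAccA (s ++ [aa])).rank ≤ (hAccC l').rank :=
        fun l' h1 h2 => ihs _ ⟨hpt, aa, rfl⟩ hpt l' h1 h2
      have key : ∀ m : List ↥Sl,
          (List.Pairwise (fun a b : ↥Sl => ¬ a ≤ b ∧ ¬ b ≤ a) m) →
          width B * (hAccA (s ++ [aa])).rank + (hAccS Sl m).rank
            ≤ (hAccC (l ++ m.map fm)).rank := by
        intro m
        induction hAccS Sl m with
        | intro m haccm ihm =>
          intro hm
          have hblk := hblock m hm
          have hcmp := hcmps m
          rw [Acc.rank_eq (hAccS Sl m)]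
          rcases isEmpty_or_nonempty
            {t // ExtRel (fun l : List ↥Sl => l.Pairwise fun a b => ¬ a ≤ b ∧ ¬ b ≤ a) t m}
            with hemp2 | hne2
          · rw [ciSup_of_empty]
            rw [Ordinal.bot_eq_zero, add_zero]
            exact hbase _ hblk hcmp
          refine le_trans
            (le_of_eq ((Ordinal.isNormal_add_right
              (width B * (hAccA (s ++ [aa])).rank)).map_iSup Ordinal.bddAbove_of_small))
            (Ordinal.iSup_le ?_)
          rintro ⟨t, ht⟩
          obtain ⟨hpt', y, rfl⟩ := ht
          rw [Ordinal.add_succ, Order.succ_le_iff]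
          have hrel : ExtRel
              (fun l : List (A × B) => l.Pairwise fun a b => ¬ a ≤ b ∧ ¬ b ≤ a)
              (l ++ (m ++ [y]).map fm) (l ++ m.map fm) :=
            ⟨hblock _ hpt', fm y, by rw [List.map_append, ← List.append_assoc]; rfl⟩
          refine lt_of_le_of_lt (ihm _ ⟨hpt', y, rfl⟩ hpt') ?_
          exact Acc.rank_lt_of_rel (hAccC (l ++ m.map fm)) hrel
      have key0 := key [] List.Pairwise.nil
      rw [hwS l] at key0
      simp only [List.map_nil, List.append_nil] at key0
      exact key0
  have h0 := main [] List.Pairwise.nil [] List.Pairwise.nil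
    (fun p hp => absurd hp List.not_mem_nil)
  rw [show mot A = (hAccA []).rank from treeRank_eq_rank _,
    show width (A × B) = (hAccC []).rank from treeRank_eq_rank _]
  exact h0
end
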